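/- For every β > 0 and every t ≥ 0, μ{x : f(x) − E[f] > t} ≤ exp( β ∫₀^β S_f(γ)/γ² dγ − β t ). -/

import Mathlib

open MeasureTheory Real

/-- Thermal expectation `E_{βf}[g] = E[g e^{βf}] / E[e^{βf}]`. -/
noncomputable def thermalExp {Ω : Type*} [MeasurableSpace Ω] (μ : Measure Ω)
    (β : ℝ) (f g : Ω → ℝ) : ℝ :=
  (∫ x, g x * Real.exp (β * f x) ∂μ) / ∫ x, Real.exp (β * f x) ∂μ

/-- Canonical entropy `S_f(β) = β E_{βf}[f] − ln Z_{βf}`. -/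
noncomputable def canEntropy {Ω : Type*} [MeasurableSpace Ω] (μ : Measure Ω)
    (f : Ω → ℝ) (β : ℝ) : ℝ :=
  β * thermalExp μ β f f - Real.log (∫ x, Real.exp (β * f x) ∂μ)

/-!
Write `Λ = cgf f μ` for the log-partition function `γ ↦ ln Z_{γf}`. Then `S_f(γ) = γ Λ'(γ) - Λ(γ)`,
which is `γ² (Λ(γ)/γ)'`; it is nonnegative because `Λ` is convex, so the integrand is integrable
near `0`. As `Λ(γ)/γ → Λ'(0) = E[f]` when `γ → 0`, the integral equals `Λ(β)/β - E[f]`, and the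
bound becomes the Chernoff bound `μ{f ≥ E[f] + t} ≤ exp(Λ(β) - β (E[f] + t))`.
-/

open ProbabilityTheory Set

namespace ProbabilityTheory

variable {Ω : Type*} [MeasurableSpace Ω] {μ : Measure Ω} {X : Ω → ℝ} {γ β : ℝ}

lemma convexOn_cgf : ConvexOn ℝ (interior (integrableExpSet X μ)) (cgf X μ) := by
  refine convexOn_of_deriv2_nonneg' convex_integrableExpSet.interior
    analyticOnNhd_cgf.differentiableOn
    (fun v hv ↦ (analyticAt_cgf hv).deriv.differentiableAt.differentiableWithinAt) fun v hv ↦ ?_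
  rw [← iteratedDeriv_eq_iterate, iteratedDeriv_two_cgf_eq_integral hv]
  exact div_nonneg (integral_nonneg fun ω ↦ by positivity) mgf_nonneg

lemma canEntropy_eq_deriv_cgf (hγ : γ ∈ interior (integrableExpSet X μ)) :
    canEntropy μ X γ = γ * deriv (cgf X μ) γ - cgf X μ γ := by
  rw [deriv_cgf hγ]
  rfl

lemma canEntropy_nonneg [IsZeroOrProbabilityMeasure μ] (h0 : 0 ∈ interior (integrableExpSet X μ))
    (hγ : γ ∈ interior (integrableExpSet X μ)) : 0 ≤ canEntropy μ X γ := by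
  have hd : DifferentiableAt ℝ (cgf X μ) γ := (analyticAt_cgf hγ).differentiableAt
  rw [canEntropy_eq_deriv_cgf hγ]
  rcases lt_trichotomy γ 0 with hneg | rfl | hpos
  · have hslope := convexOn_cgf.deriv_le_slope hγ h0 hneg hd
    rw [slope_def_field, cgf_zero, le_div_iff₀ (by linarith)] at hslope
    linarith
  · simp
  · have hslope := convexOn_cgf.slope_le_deriv h0 hγ hpos hd
    rw [slope_def_field, cgf_zero, div_le_iff₀ (by linarith)] at hslope
    linarith

lemma hasDerivAt_cgf_div (hγ : γ ∈ interior (integrableExpSet X μ)) (hγ0 : γ ≠ 0) :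
    HasDerivAt (fun s ↦ cgf X μ s / s) (canEntropy μ X γ / γ ^ 2) γ := by
  refine ((analyticAt_cgf hγ).differentiableAt.hasDerivAt.div (hasDerivAt_id' γ) hγ0).congr_deriv ?_
  rw [canEntropy_eq_deriv_cgf hγ]
  ring

lemma integral_canEntropy_div_sq [IsProbabilityMeasure μ]
    (hX : ∀ t, Integrable (fun ω ↦ exp (t * X ω)) μ) (hβ : 0 < β) :
    ∫ γ in 0..β, canEntropy μ X γ / γ ^ 2 = cgf X μ β / β - μ[X] := by
  have hmem (t : ℝ) : t ∈ interior (integrableExpSet X μ) := by simp [integrableExpSet, hX]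
  have hslope : slope (cgf X μ) 0 = fun s ↦ cgf X μ s / s := by
    ext s
    simp [slope_def_field]
  have hcont : Continuous (dslope (cgf X μ) 0) := by
    rw [← continuousOn_univ, continuousOn_dslope Filter.univ_mem]
    exact ⟨fun t _ ↦ (analyticAt_cgf (hmem t)).continuousAt.continuousWithinAt,
      (analyticAt_cgf (hmem 0)).differentiableAt⟩
  have hderiv : ∀ γ ∈ Ioo 0 β, HasDerivAt (dslope (cgf X μ) 0) (canEntropy μ X γ / γ ^ 2) γ := by
    intro γ hγ
    have hdiv := hasDerivAt_cgf_div (hmem γ) hγ.1.ne'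
    rw [← hslope] at hdiv
    exact hdiv.congr_of_eventuallyEq (dslope_eventuallyEq_slope_of_ne _ hγ.1.ne')
  have hnonneg : ∀ γ ∈ Ioo 0 β, 0 ≤ canEntropy μ X γ / γ ^ 2 := fun γ _ ↦
    div_nonneg (canEntropy_nonneg (hmem 0) (hmem γ)) (sq_nonneg γ)
  rw [intervalIntegral.integral_eq_sub_of_hasDerivAt_of_le hβ.le hcont.continuousOn hderiv
    ((intervalIntegrable_iff_integrableOn_Ioc_of_le hβ.le).2
      (intervalIntegral.integrableOn_deriv_of_nonneg hcont.continuousOn hderiv hnonneg)),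
    dslope_of_ne _ hβ.ne', dslope_same, deriv_cgf_zero (hmem 0), hslope]
  simp

end ProbabilityTheory

theorem stmt_1_general {Ω : Type*} [MeasurableSpace Ω] (μ : Measure Ω) [IsProbabilityMeasure μ]
    (f : Ω → ℝ) (hf : Measurable f) (C : ℝ) (hC : ∀ x, |f x| ≤ C)
    (β : ℝ) (hβ : 0 < β) (t : ℝ) :
    (μ {x | f x - ∫ y, f y ∂μ > t}).toReal
      ≤ Real.exp (β * (∫ γ in (0:ℝ)..β, canEntropy μ f γ / γ ^ 2) - β * t) := by
  have hexp (s : ℝ) : Integrable (fun x ↦ exp (s * f x)) μ :=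
    integrable_exp_mul_of_mem_Icc hf.aemeasurable (ae_of_all _ fun x ↦ abs_le.mp (hC x))
  have hexponent : β * (cgf f μ β / β - μ[f]) - β * t = -β * (μ[f] + t) + cgf f μ β := by
    field_simp
    ring
  rw [integral_canEntropy_div_sq hexp hβ, hexponent]
  calc (μ {x | f x - μ[f] > t}).toReal ≤ μ.real {x | μ[f] + t ≤ f x} :=
        measureReal_mono fun x (hx : f x - μ[f] > t) ↦ show μ[f] + t ≤ f x by linarith
    _ ≤ exp (-β * (μ[f] + t) + cgf f μ β) := measure_ge_le_exp_cgf _ hβ.le (hexp β)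

theorem stmt_1 {Ω : Type*} [MeasurableSpace Ω] (μ : Measure Ω) [IsProbabilityMeasure μ]
    (f : Ω → ℝ) (hf : Measurable f) (C : ℝ) (hC : ∀ x, |f x| ≤ C)
    (β : ℝ) (hβ : 0 < β) (t : ℝ) (ht : 0 ≤ t) :
    (μ {x | f x - ∫ y, f y ∂μ > t}).toReal
      ≤ Real.exp (β * (∫ γ in (0:ℝ)..β, canEntropy μ f γ / γ ^ 2) - β * t) :=
  stmt_1_general μ f hf C hC β hβ t
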